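/- Suppose α ↘ β, meaning there exist indices k < l with β_k = α_k − 1, β_l = α_l + 1, and β_i = α_i otherwise (with α_k − 1 ≥ α_l + 1 so β is still weakly decreasing). Then [α] − [β] = (1/2)·R((x_k − x_l)² · (Σ_{j=α_l}^{α_k−2} x_k^j x_l^{α_k+α_l−2−j}) · Π_{i≠k,l} x_i^{α_i}), where R is the symmetrization operator Rf = (1/n!) Σ_{σ∈Sₙ} f(x_{σ(1)},…,x_{σ(n)}). -/

import Mathlib

open Finset MvPolynomial

/-- The Reynolds (symmetrization) operator of the symmetric group `Sₙ`. -/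
noncomputable def reynolds (n : ℕ) (f : MvPolynomial (Fin n) ℝ) : MvPolynomial (Fin n) ℝ :=
  ((n.factorial : ℝ))⁻¹ • ∑ σ : Equiv.Perm (Fin n), rename σ f

/-- The normalized monomial symmetric polynomial `[α]`. -/
noncomputable def msym (n : ℕ) (α : Fin n → ℕ) : MvPolynomial (Fin n) ℝ :=
  reynolds n (∏ j, X j ^ α j)

/-!
With `a = α k` and `b = α l`, the geometric-sum identity turns `(x - y)² · ∑ x^j y^(a+b-2-j)` into
`x^a y^b + x^b y^a - x^(a-1) y^(b+1) - x^(b+1) y^(a-1)`. The remaining factor `∏ xᵢ^αᵢ` is fixed by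
the transposition `(k l)`, and the Reynolds operator is invariant under renaming variables, so the
two mirrored monomials have the same symmetrization: the right-hand side is `½ (2 [α] - 2 [β])`.
-/

theorem sq_sub_mul_sum_Icc_pow_mul_pow {R : Type*} [CommRing R] (x y : R) {a b : ℕ}
    (hba : b + 2 ≤ a) :
    (x - y) ^ 2 * ∑ j ∈ Icc b (a - 2), x ^ j * y ^ (a + b - 2 - j) =
      x ^ a * y ^ b + x ^ b * y ^ a - x ^ (a - 1) * y ^ (b + 1) - x ^ (b + 1) * y ^ (a - 1) := by
  obtain ⟨m, rfl⟩ : ∃ m, a = b + m + 2 := ⟨a - b - 2, by omega⟩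
  have hsum : ∑ j ∈ Icc b (b + m + 2 - 2), x ^ j * y ^ (b + m + 2 + b - 2 - j) =
      x ^ b * y ^ b * ∑ i ∈ range (m + 1), x ^ i * y ^ (m + 1 - 1 - i) := by
    rw [← Ico_add_one_right_eq_Icc, sum_Ico_eq_sum_range, mul_sum]
    refine sum_congr (by congr 1; omega) fun i hi => ?_
    rw [mem_range] at hi
    rw [show b + m + 2 + b - 2 - (b + i) = b + (m + 1 - 1 - i) by omega]
    ring
  rw [hsum, show b + m + 2 - 1 = b + m + 1 by omega]
  linear_combination x ^ b * y ^ b * (x - y) * geom_sum₂_mul x y (m + 1)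

theorem Fintype.prod_eq_mul_mul_prod_filter_ne_ne {ι M : Type*} [Fintype ι] [DecidableEq ι]
    [CommMonoid M] {k l : ι} (hkl : k ≠ l) (f : ι → M) :
    ∏ i, f i = f k * f l * ∏ i ∈ univ.filter (fun i => i ≠ k ∧ i ≠ l), f i := by
  rw [← prod_filter_mul_prod_filter_not univ (fun i => i ≠ k ∧ i ≠ l), mul_comm]
  congr 1
  have : univ.filter (fun i => ¬(i ≠ k ∧ i ≠ l)) = {k, l} := by
    ext i
    simp only [mem_filter, mem_univ, true_and, mem_insert, mem_singleton]
    tauto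
  rw [this, prod_pair hkl]

theorem rename_swap_prod_filter_ne_ne {σ R : Type*} [DecidableEq σ] [CommSemiring R]
    (s : Finset σ) (k l : σ) (γ : σ → ℕ) :
    rename (Equiv.swap k l)
        (∏ i ∈ s.filter (fun i => i ≠ k ∧ i ≠ l), (X i : MvPolynomial σ R) ^ γ i) =
      ∏ i ∈ s.filter (fun i => i ≠ k ∧ i ≠ l), X i ^ γ i := by
  rw [map_prod]
  refine prod_congr rfl fun i hi => ?_
  rw [mem_filter] at hi
  rw [map_pow, rename_X, Equiv.swap_apply_of_ne_of_ne hi.2.1 hi.2.2]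

section Reynolds

variable {n : ℕ}

theorem reynolds_rename (σ : Equiv.Perm (Fin n)) (f : MvPolynomial (Fin n) ℝ) :
    reynolds n (rename σ f) = reynolds n f := by
  unfold reynolds
  congr 1
  simp_rw [rename_rename]
  exact Equiv.sum_comp (Equiv.mulRight σ) (fun τ : Equiv.Perm (Fin n) => rename τ f)

theorem reynolds_add (f g : MvPolynomial (Fin n) ℝ) :
    reynolds n (f + g) = reynolds n f + reynolds n g := by
  simp only [reynolds, map_add, sum_add_distrib, smul_add]

theorem reynolds_sub (f g : MvPolynomial (Fin n) ℝ) :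
    reynolds n (f - g) = reynolds n f - reynolds n g := by
  simp only [reynolds, map_sub, sum_sub_distrib, smul_sub]

theorem reynolds_swap_exponents {k l : Fin n} {m : MvPolynomial (Fin n) ℝ}
    (hm : rename (Equiv.swap k l) m = m) (p q : ℕ) :
    reynolds n (X k ^ p * X l ^ q * m) = reynolds n (X k ^ q * X l ^ p * m) := by
  rw [← reynolds_rename (Equiv.swap k l) (X k ^ q * X l ^ p * m)]
  congr 1
  rw [map_mul, map_mul, map_pow, map_pow, rename_X, rename_X,
    Equiv.swap_apply_left, Equiv.swap_apply_right, hm]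
  ring

end Reynolds

theorem single_step_identity_general (n : ℕ) (α β : Fin n → ℕ)
    (k l : Fin n) (hkl : k < l)
    (hk : α k = β k + 1) (hl : β l = α l + 1)
    (hother : ∀ i : Fin n, i ≠ k → i ≠ l → β i = α i)
    (hstep : α l + 2 ≤ α k) :
    msym n α - msym n β =
      (2 : ℝ)⁻¹ • reynolds n
        ((X k - X l) ^ 2 *
          (∑ j ∈ Finset.Icc (α l) (α k - 2),
            X k ^ j * X l ^ (α k + α l - 2 - j)) *
          ∏ i ∈ univ.filter (fun i : Fin n => i ≠ k ∧ i ≠ l), X i ^ α i) := by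
  set m : MvPolynomial (Fin n) ℝ := ∏ i ∈ univ.filter (fun i => i ≠ k ∧ i ≠ l), X i ^ α i
  have hm : rename (Equiv.swap k l) m = m := rename_swap_prod_filter_ne_ne _ _ _ _
  have hmsym_α : msym n α = reynolds n (X k ^ α k * X l ^ α l * m) := by
    rw [msym, Fintype.prod_eq_mul_mul_prod_filter_ne_ne hkl.ne]
  have hmsym_β : msym n β = reynolds n (X k ^ (α k - 1) * X l ^ (α l + 1) * m) := by
    rw [msym, Fintype.prod_eq_mul_mul_prod_filter_ne_ne hkl.ne, hl, show β k = α k - 1 by omega]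
    refine congrArg (fun p => reynolds n (_ * p)) (prod_congr rfl fun i hi => ?_)
    rw [mem_filter] at hi
    rw [hother i hi.2.1 hi.2.2]
  rw [hmsym_α, hmsym_β, sq_sub_mul_sum_Icc_pow_mul_pow _ _ hstep, sub_sub, sub_mul,
    add_mul, add_mul, reynolds_sub, reynolds_add, reynolds_add,
    reynolds_swap_exponents hm (α l), reynolds_swap_exponents hm (α l + 1)]
  module

theorem single_step_identity (n : ℕ) (α β : Fin n → ℕ)
    (hα : ∀ i j : Fin n, i ≤ j → α j ≤ α i) (hβ : ∀ i j : Fin n, i ≤ j → β j ≤ β i)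
    (k l : Fin n) (hkl : k < l)
    (hk : α k = β k + 1) (hl : β l = α l + 1)
    (hother : ∀ i : Fin n, i ≠ k → i ≠ l → β i = α i)
    (hstep : α l + 2 ≤ α k) :
    msym n α - msym n β =
      (2 : ℝ)⁻¹ • reynolds n
        ((X k - X l) ^ 2 *
          (∑ j ∈ Finset.Icc (α l) (α k - 2),
            X k ^ j * X l ^ (α k + α l - 2 - j)) *
          ∏ i ∈ univ.filter (fun i : Fin n => i ≠ k ∧ i ≠ l), X i ^ α i) :=
  single_step_identity_general n α β k l hkl hk hl hother hstep
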